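/- Let N ≥ 1 and let A ⊆ ℝ^N be not relatively compact (equivalently, unbounded). Then nBC∞I(A) is maximal pointwise lineable in X: the dimension of X as a real vector space equals 𝔠, and for every f ∈ nBC∞I(A) there exists a linear subspace W of the space of functions ℝ^N → ℝ with dim(W) = 𝔠 and f ∈ W ⊆ nBC∞I(A) ∪ {0}. -/

import Mathlib

open MeasureTheory Filter Topology

noncomputable section

/-- Euclidean space `ℝ^N`. -/
abbrev RN (N : ℕ) := EuclideanSpace ℝ (Fin N)

/-- The space `X = C^∞(ℝ^N) ∩ ⋂_{p ∈ [1,∞)} L^p(ℝ^N)` of infinitely differentiable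
functions that are `p`-integrable for every real `p ≥ 1`. -/
def SmoothIntegrable (N : ℕ) : Set (RN N → ℝ) :=
  {f | ContDiff ℝ (⊤ : ℕ∞) f ∧
       ∀ p : ℝ, 1 ≤ p → MemLp f (ENNReal.ofReal p) volume}

/-- `f` is unbounded on `A`, i.e. `sup_{x ∈ A} |f x| = +∞`. -/
def UnboundedOn {N : ℕ} (A : Set (RN N)) (f : RN N → ℝ) : Prop :=
  ∀ C : ℝ, ∃ x ∈ A, C < |f x|

/-- `nBC∞I(A) = {f ∈ X : f is unbounded on A}`. -/
def nBCI {N : ℕ} (A : Set (RN N)) : Set (RN N → ℝ) :=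
  {f | f ∈ SmoothIntegrable N ∧ UnboundedOn A f}

/-!
Given `f ∈ nBC∞I(A)`, choose points `x k ∈ A` escaping to infinity with gaps at least `1` and
`|f (x k)| ≥ k ^ k`, and a smooth `η ≥ 0` with `η (x k) = k` (a locally finite sum of bumps).
The functions `c ^ η * f`, `0 < c ≤ 1`, lie in `X` because `|c ^ η * f| ≤ |f|`. A nontrivial
combination `∑ λ_c c ^ η * f` takes the value `(∑ λ_c c ^ k) * f (x k)` at `x k`; the first
factor is eventually at least a multiple of `c₀ ^ k`, where `c₀` is the largest `c` with
`λ_c ≠ 0`, so the combination is unbounded on `A` since `(c₀ k) ^ k → ∞`. In particular these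
`𝔠` functions are linearly independent. The same family built on a Gaussian instead of `f`
gives `dim X ≥ 𝔠`; conversely, restriction to a countable dense set embeds `X` into `ℝ ^ ℕ`.
-/

open Metric Cardinal
open scoped ContDiff ENNReal

theorem exists_eventually_le_abs_sum_mul_pow {ι : Type*} {r : ι → ℝ} (hr : Function.Injective r)
    (hr0 : ∀ i, 0 < r i) {l : ι →₀ ℝ} (hl : l ≠ 0) :
    ∃ a > 0, ∃ c > 0, ∀ᶠ k : ℕ in atTop, a * c ^ k ≤ |∑ i ∈ l.support, l i * r i ^ k| := by
  classical
  obtain ⟨i₀, hi₀, hmax⟩ :=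
    l.support.exists_max_image r (Finsupp.support_nonempty_iff.2 hl)
  have hc := hr0 i₀
  have ha : 0 < |l i₀| := abs_pos.2 (Finsupp.mem_support_iff.1 hi₀)
  -- dividing by the dominant power `r i₀ ^ k` leaves a sum tending to the coefficient `l i₀`
  have hlim : Tendsto (fun k : ℕ => ∑ i ∈ l.support, l i * (r i / r i₀) ^ k) atTop
      (𝓝 (∑ i ∈ l.support, if i = i₀ then l i else 0)) := by
    refine tendsto_finsetSum _ fun i hi => ?_
    split_ifs with h
    · simp [h, div_self hc.ne']
    · have hlt : r i / r i₀ < 1 :=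
        (div_lt_one hc).2 ((hmax i hi).lt_of_ne (hr.ne h))
      simpa using
        (tendsto_pow_atTop_nhds_zero_of_lt_one (div_pos (hr0 i) hc).le hlt).const_mul (l i)
  rw [Finset.sum_ite_eq', if_pos hi₀] at hlim
  refine ⟨|l i₀| / 2, half_pos ha, r i₀, hc, ?_⟩
  filter_upwards [hlim.abs.eventually (lt_mem_nhds (half_lt_self ha))] with k hk
  have hck : 0 < r i₀ ^ k := pow_pos hc k
  have hsum : ∑ i ∈ l.support, l i * (r i / r i₀) ^ k
      = (∑ i ∈ l.support, l i * r i ^ k) / r i₀ ^ k := by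
    rw [Finset.sum_div]
    exact Finset.sum_congr rfl fun i _ => by rw [div_pow, mul_div_assoc]
  rw [hsum, abs_div, abs_of_pos hck, lt_div_iff₀ hck] at hk
  exact hk.le

theorem tendsto_mul_natCast_pow_self_atTop {c : ℝ} (hc : 0 < c) :
    Tendsto (fun k : ℕ => (c * k) ^ k) atTop atTop := by
  have hlin : Tendsto (fun k : ℕ => c * k) atTop atTop :=
    tendsto_natCast_atTop_atTop.const_mul_atTop hc
  refine tendsto_atTop_mono' atTop ?_ hlin
  filter_upwards [hlin.eventually_ge_atTop 1, eventually_ne_atTop 0] with k hk hk0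
  exact le_self_pow₀ hk hk0

theorem norm_add_le_norm_add_of_norm_add_one_le {E : Type*} [SeminormedAddCommGroup E]
    {x : ℕ → E} (hx : ∀ n, ‖x n‖ + 1 ≤ ‖x (n + 1)‖) (m k : ℕ) : ‖x m‖ + k ≤ ‖x (m + k)‖ := by
  induction k with
  | zero => simp
  | succ k ih => rw [← add_assoc]; push_cast; linarith [hx (m + k)]

theorem exists_contDiff_nonneg_apply_eq_nat {E : Type*} [NormedAddCommGroup E]
    [NormedSpace ℝ E] [HasContDiffBump E] {x : ℕ → E} (hx : ∀ n, ‖x n‖ + 1 ≤ ‖x (n + 1)‖) :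
    ∃ η : E → ℝ, ContDiff ℝ ∞ η ∧ (∀ y, 0 ≤ η y) ∧ ∀ k, η (x k) = k := by
  have hgrow := norm_add_le_norm_add_of_norm_add_one_le hx
  have hnorm (n : ℕ) : (n : ℝ) ≤ ‖x n‖ := by
    simpa using (hgrow 0 n).trans' (le_add_of_nonneg_left (norm_nonneg (x 0)))
  have hsep {m n : ℕ} (h : m ≠ n) : 1 ≤ dist (x m) (x n) := by
    wlog hmn : m < n generalizing m n
    · rw [dist_comm]; exact this h.symm (by omega)
    obtain ⟨k, rfl⟩ := Nat.exists_eq_add_of_lt hmn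
    have := hgrow m (k + 1)
    rw [← add_assoc] at this
    push_cast at this
    linarith [norm_sub_norm_le (x (m + k + 1)) (x m), dist_comm (x m) (x (m + k + 1)),
      dist_eq_norm (x (m + k + 1)) (x m)]
  let b (n : ℕ) : ContDiffBump (x n) := ⟨1 / 4, 1 / 2, by norm_num, by norm_num⟩
  have hfin : LocallyFinite fun n : ℕ => Function.support fun y => (n : ℝ) * b n y := by
    refine LocallyFinite.subset (f := fun n => ball (x n) (1 / 2)) (fun y => ?_)
      fun n => (Function.support_mul_subset_right _ _).trans (b n).support_eq.subset
    refine ⟨ball y 1, ball_mem_nhds y one_pos, (Set.finite_Iio ⌈‖y‖ + 2⌉₊).subset ?_⟩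
    rintro n ⟨z, hzn, hzy⟩
    have hdist : dist (x n) y < 3 / 2 := by
      linarith [dist_triangle (x n) z y, mem_ball'.1 hzn, mem_ball.1 hzy]
    have : (n : ℝ) < ⌈‖y‖ + 2⌉₊ := by
      linarith [Nat.le_ceil (‖y‖ + 2), hnorm n, norm_sub_norm_le (x n) y, dist_eq_norm (x n) y]
    exact_mod_cast this
  refine ⟨fun y => ∑ᶠ n : ℕ, (n : ℝ) * b n y, ?_,
    fun y => finsum_nonneg fun n => mul_nonneg n.cast_nonneg (b n).nonneg, fun k => ?_⟩
  · rw [← contMDiff_iff_contDiff]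
    exact contMDiff_finsum (fun n => contMDiff_iff_contDiff.2
      (contDiff_const.mul (b n).contDiff)) hfin
  · show ∑ᶠ n : ℕ, (n : ℝ) * b n (x k) = k
    have hone : b k (x k) = 1 := (b k).one_of_mem_closedBall (by simp [(b k).rIn_pos.le])
    rw [finsum_eq_single _ k fun n hn => ?_, hone, mul_one]
    rw [(b n).zero_of_le_dist ?_, mul_zero]
    change 1 / 2 ≤ dist (x k) (x n)
    linarith [hsep hn.symm]

theorem memLp_exp_neg_norm_sq {V : Type*} [NormedAddCommGroup V] [InnerProductSpace ℝ V]
    [FiniteDimensional ℝ V] [MeasurableSpace V] [BorelSpace V] (p : ℝ≥0∞) :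
    MemLp (fun v : V => Real.exp (-‖v‖ ^ 2)) p := by
  have hmeas : AEStronglyMeasurable (fun v : V => Real.exp (-‖v‖ ^ 2)) :=
    (by fun_prop : Continuous fun v : V => Real.exp (-‖v‖ ^ 2)).aestronglyMeasurable
  rcases eq_or_ne p 0 with rfl | hp0
  · exact memLp_zero_iff_aestronglyMeasurable.2 hmeas
  rcases eq_or_ne p ∞ with rfl | hptop
  · refine memLp_top_of_bound hmeas 1 (Eventually.of_forall fun v => ?_)
    simp [Real.norm_eq_abs, abs_of_pos (Real.exp_pos _)]
  rw [← integrable_norm_rpow_iff hmeas hp0 hptop]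
  have hp : 0 < p.toReal := ENNReal.toReal_pos hp0 hptop
  refine (GaussianFourier.integrable_cexp_neg_mul_sq_norm_add (V := V) (b := p.toReal)
    (by simpa using hp) 0 0).re.congr (Eventually.of_forall fun v => ?_)
  simp only [RCLike.re_to_complex, zero_mul, add_zero, ← Complex.ofReal_pow,
    ← Complex.ofReal_mul, ← Complex.ofReal_neg, Complex.exp_ofReal_re]
  rw [Real.norm_eq_abs, abs_of_pos (Real.exp_pos _), ← Real.exp_mul]
  ring_nf

theorem mk_setOf_continuous_le_continuum {E : Type} [TopologicalSpace E]
    [TopologicalSpace.SeparableSpace E] : #{f : E → ℝ | Continuous f} ≤ 𝔠 := by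
  obtain ⟨s, hsc, hsd⟩ := TopologicalSpace.exists_countable_dense E
  have : Countable s := hsc.to_subtype
  have hinj :
      Function.Injective fun (f : {f : E → ℝ | Continuous f}) (y : s) => (f : E → ℝ) y :=
    fun f g h => Subtype.ext <| Continuous.ext_on hsd f.2 g.2 fun y hy => congrFun h ⟨y, hy⟩
  calc #{f : E → ℝ | Continuous f} ≤ #(s → ℝ) := mk_le_of_injective hinj
    _ = 𝔠 ^ #s := by rw [← mk_real, power_def]
    _ ≤ 𝔠 ^ ℵ₀ := power_le_power_left continuum_ne_zero mk_le_aleph0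
    _ = 𝔠 := continuum_power_aleph0

theorem rank_span_range_eq_continuum {M : Type} [AddCommGroup M] [Module ℝ M]
    {v : Set.Ioc (0 : ℝ) 1 → M} (hv : LinearIndependent ℝ v) :
    Module.rank ℝ (Submodule.span ℝ (Set.range v)) = 𝔠 := by
  rw [rank_span hv, mk_range_eq _ hv.injective, mk_Ioc_real zero_lt_one]

section Family

variable {α : Type*} (η w : α → ℝ)

def rpowMul (c : Set.Ioc (0 : ℝ) 1) : α → ℝ := fun y => (c : ℝ) ^ η y * w y

variable {η w}

theorem rpowMul_one : rpowMul η w ⟨1, Set.right_mem_Ioc.2 zero_lt_one⟩ = w := by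
  ext
  simp [rpowMul]

theorem linearCombination_rpowMul_apply (l : Set.Ioc (0 : ℝ) 1 →₀ ℝ) {y : α} {k : ℕ}
    (hk : η y = k) :
    Finsupp.linearCombination ℝ (rpowMul η w) l y
      = (∑ c ∈ l.support, l c * (c : ℝ) ^ k) * w y := by
  simp [Finsupp.linearCombination_apply, Finsupp.sum, rpowMul, hk, Finset.sum_mul, mul_assoc]

theorem linearIndependent_rpowMul {x : ℕ → α} (hη : ∀ k, η (x k) = k)
    (hw : ∀ k, w (x k) ≠ 0) : LinearIndependent ℝ (rpowMul η w) := by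
  rw [linearIndependent_iff]
  intro l hl
  by_contra hl0
  obtain ⟨a, ha, c, hc, hev⟩ :=
    exists_eventually_le_abs_sum_mul_pow Subtype.val_injective (fun c => c.2.1) hl0
  obtain ⟨k, hk⟩ := hev.exists
  have hzero := congrFun hl (x k)
  rw [linearCombination_rpowMul_apply l (hη k)] at hzero
  rcases mul_eq_zero.1 hzero with h | h
  · rw [h, abs_zero] at hk
    exact (mul_pos ha (pow_pos hc k)).not_ge hk
  · exact hw k h

end Family

def smoothIntegrableSubmodule (N : ℕ) : Submodule ℝ (RN N → ℝ) where
  carrier := SmoothIntegrable N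
  add_mem' hf hg := ⟨hf.1.add hg.1, fun p hp => (hf.2 p hp).add (hg.2 p hp)⟩
  zero_mem' := ⟨contDiff_const, fun _ _ => MemLp.zero⟩
  smul_mem' c _ hf := ⟨hf.1.const_smul c, fun p hp => (hf.2 p hp).const_smul c⟩

theorem span_smoothIntegrable (N : ℕ) :
    Submodule.span ℝ (SmoothIntegrable N) = smoothIntegrableSubmodule N :=
  Submodule.span_eq (smoothIntegrableSubmodule N)

theorem rank_smoothIntegrableSubmodule_le (N : ℕ) :
    Module.rank ℝ (smoothIntegrableSubmodule N) ≤ 𝔠 :=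
  (rank_le_card ℝ _).trans <| (mk_le_mk_of_subset fun _ hf => hf.1.continuous).trans
    mk_setOf_continuous_le_continuum

theorem exp_neg_norm_sq_mem_smoothIntegrable (N : ℕ) :
    (fun y : RN N => Real.exp (-‖y‖ ^ 2)) ∈ SmoothIntegrable N :=
  ⟨(contDiff_norm_sq ℝ).neg.exp, fun _ _ => memLp_exp_neg_norm_sq _⟩

theorem rpowMul_mem_smoothIntegrable {N : ℕ} {η w : RN N → ℝ} (hη : ContDiff ℝ ∞ η)
    (hη0 : ∀ y, 0 ≤ η y) (hw : w ∈ SmoothIntegrable N) (c : Set.Ioc (0 : ℝ) 1) :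
    rpowMul η w c ∈ SmoothIntegrable N := by
  have hsmooth : ContDiff ℝ ∞ (rpowMul η w c) :=
    (contDiff_const.rpow hη fun _ => c.2.1.ne').mul hw.1
  refine ⟨hsmooth, fun p hp => (hw.2 p hp).of_le hsmooth.continuous.aestronglyMeasurable
    (Eventually.of_forall fun y => ?_)⟩
  rw [rpowMul, norm_mul]
  refine mul_le_of_le_one_left (norm_nonneg _) ?_
  rw [Real.norm_of_nonneg (Real.rpow_nonneg c.2.1.le _)]
  exact Real.rpow_le_one c.2.1.le c.2.2 (hη0 y)

theorem span_range_rpowMul_le {N : ℕ} {η w : RN N → ℝ} (hη : ContDiff ℝ ∞ η)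
    (hη0 : ∀ y, 0 ≤ η y) (hw : w ∈ SmoothIntegrable N) :
    Submodule.span ℝ (Set.range (rpowMul η w)) ≤ smoothIntegrableSubmodule N :=
  Submodule.span_le.2 <| Set.range_subset_iff.2 <| rpowMul_mem_smoothIntegrable hη hη0 hw

theorem unboundedOn_linearCombination_rpowMul {N : ℕ} {A : Set (RN N)} {η w : RN N → ℝ}
    {x : ℕ → RN N} (hxA : ∀ k, x k ∈ A) (hη : ∀ k, η (x k) = k)
    (hw : ∀ k : ℕ, (k : ℝ) ^ k ≤ |w (x k)|) {l : Set.Ioc (0 : ℝ) 1 →₀ ℝ} (hl : l ≠ 0) :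
    UnboundedOn A (Finsupp.linearCombination ℝ (rpowMul η w) l) := by
  obtain ⟨a, ha, c, hc, hev⟩ :=
    exists_eventually_le_abs_sum_mul_pow Subtype.val_injective (fun c => c.2.1) hl
  have hlim : Tendsto (fun k => |Finsupp.linearCombination ℝ (rpowMul η w) l (x k)|)
      atTop atTop := by
    refine tendsto_atTop_mono' atTop ?_
      ((tendsto_mul_natCast_pow_self_atTop hc).const_mul_atTop ha)
    filter_upwards [hev] with k hk
    rw [linearCombination_rpowMul_apply l (hη k), abs_mul, mul_pow, ← mul_assoc]
    exact mul_le_mul hk (hw k) (by positivity) (abs_nonneg _)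
  intro C
  obtain ⟨k, hk⟩ := (hlim.eventually_gt_atTop C).exists
  exact ⟨x k, hxA k, hk⟩

theorem UnboundedOn.exists_mem_le_abs_le_norm {N : ℕ} {A : Set (RN N)} {f : RN N → ℝ}
    (h : UnboundedOn A f) (hf : Continuous f) (C R : ℝ) :
    ∃ y ∈ A, C ≤ |f y| ∧ R ≤ ‖y‖ := by
  obtain ⟨B, hB⟩ :=
    (isCompact_closedBall (0 : RN N) R).exists_bound_of_continuousOn hf.continuousOn
  obtain ⟨y, hyA, hy⟩ := h (max C B)
  refine ⟨y, hyA, (le_max_left C B).trans hy.le, not_lt.1 fun hyR => ?_⟩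
  have := hB y (mem_closedBall_zero_iff.2 hyR.le)
  rw [Real.norm_eq_abs] at this
  linarith [le_max_right C B]

theorem UnboundedOn.exists_seq {N : ℕ} {A : Set (RN N)} {f : RN N → ℝ}
    (h : UnboundedOn A f) (hf : Continuous f) :
    ∃ x : ℕ → RN N, (∀ n, x n ∈ A) ∧ (∀ n : ℕ, (n : ℝ) ^ n ≤ |f (x n)|) ∧
      ∀ n, ‖x n‖ + 1 ≤ ‖x (n + 1)‖ := by
  choose φ hφA hφf hφR using h.exists_mem_le_abs_le_norm hf
  let x : ℕ → RN N := fun n =>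
    Nat.rec (φ 1 0) (fun m y => φ (((m + 1 : ℕ) : ℝ) ^ (m + 1)) (‖y‖ + 1)) n
  refine ⟨x, fun n => ?_, fun n => ?_, fun n => hφR _ _⟩
  · cases n <;> exact hφA _ _
  · cases n
    · simpa [x] using hφf 1 0
    · exact hφf _ _

theorem rank_smoothIntegrableSubmodule {N : ℕ} (hN : 1 ≤ N) :
    Module.rank ℝ (smoothIntegrableSubmodule N) = 𝔠 := by
  refine (rank_smoothIntegrableSubmodule_le N).antisymm ?_
  let e : RN N := EuclideanSpace.single ⟨0, hN⟩ 1
  have hx (n : ℕ) : ‖(n : ℝ) • e‖ = n := by simp [e, norm_smul]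
  obtain ⟨η, hη, hη0, hηx⟩ :=
    exists_contDiff_nonneg_apply_eq_nat (x := fun n : ℕ => (n : ℝ) • e) fun n => by
      rw [hx, hx, Nat.cast_succ]
  have hli := linearIndependent_rpowMul (w := fun y => Real.exp (-‖y‖ ^ 2)) hηx
    fun k => (Real.exp_pos _).ne'
  rw [← rank_span_range_eq_continuum hli]
  exact Submodule.rank_mono
    (span_range_rpowMul_le hη hη0 (exp_neg_norm_sq_mem_smoothIntegrable N))

theorem exists_rank_eq_continuum_mem_subset_nBCI {N : ℕ} {A : Set (RN N)} {f : RN N → ℝ}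
    (hf : f ∈ nBCI A) : ∃ W : Submodule ℝ (RN N → ℝ),
      Module.rank ℝ W = 𝔠 ∧ f ∈ W ∧ (W : Set (RN N → ℝ)) ⊆ nBCI A ∪ {0} := by
  obtain ⟨x, hxA, hfx, hx⟩ := hf.2.exists_seq hf.1.1.continuous
  obtain ⟨η, hη, hη0, hηx⟩ := exists_contDiff_nonneg_apply_eq_nat hx
  have hli := linearIndependent_rpowMul hηx fun k =>
    abs_pos.1 ((by exact_mod_cast Nat.pow_self_pos : (0 : ℝ) < (k : ℝ) ^ k).trans_le (hfx k))
  refine ⟨Submodule.span ℝ (Set.range (rpowMul η f)), rank_span_range_eq_continuum hli,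
    Submodule.subset_span ⟨_, rpowMul_one⟩, fun g hg => ?_⟩
  obtain ⟨l, rfl⟩ := Finsupp.mem_span_range_iff_exists_finsupp.1 hg
  rcases eq_or_ne l 0 with rfl | hl
  · simp
  · exact Or.inl ⟨span_range_rpowMul_le hη hη0 hf.1 hg,
      unboundedOn_linearCombination_rpowMul hxA hηx hfx hl⟩

theorem nBCI_maximal_pointwise_lineable_general (N : ℕ) (hN : 1 ≤ N)
    (A : Set (RN N)) :
    Module.rank ℝ (Submodule.span ℝ (SmoothIntegrable N)) = Cardinal.continuum ∧
    ∀ f ∈ nBCI A, ∃ W : Submodule ℝ (RN N → ℝ),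
      Module.rank ℝ W = Cardinal.continuum ∧ f ∈ W ∧
      (W : Set (RN N → ℝ)) ⊆ nBCI A ∪ {0} := by
  rw [span_smoothIntegrable]
  exact ⟨rank_smoothIntegrableSubmodule hN, fun _ => exists_rank_eq_continuum_mem_subset_nBCI⟩

/-- `nBC∞I(A)` is maximal pointwise lineable in `X`: the space `X` has
dimension `𝔠` as a real vector space, and every `f ∈ nBC∞I(A)` lies in a `𝔠`-dimensional
subspace contained in `nBC∞I(A) ∪ {0}`. -/
theorem nBCI_maximal_pointwise_lineable (N : ℕ) (hN : 1 ≤ N)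
    (A : Set (RN N)) (hA : ¬ Bornology.IsBounded A) :
    Module.rank ℝ (Submodule.span ℝ (SmoothIntegrable N)) = Cardinal.continuum ∧
    ∀ f ∈ nBCI A, ∃ W : Submodule ℝ (RN N → ℝ),
      Module.rank ℝ W = Cardinal.continuum ∧ f ∈ W ∧
      (W : Set (RN N → ℝ)) ⊆ nBCI A ∪ {0} :=
  nBCI_maximal_pointwise_lineable_general N hN A
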